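/- Let H and H' be hypergraphs such that H collapses onto H' by a single elementary collapse removing hyperedges σ < τ. Then for every i ≥ 0, Sup_i(R(H)_*) = Sup_i(R(H')_*) + R⟨σ,τ⟩_i + ∂_{i+1}(R⟨σ,τ⟩_{i+1}), where R⟨σ,τ⟩_* denotes the graded module generated by σ in degree dim σ and τ in degree dim τ (and zero elsewhere). -/

import Mathlib

/-- A hypergraph: every hyperedge is a nonempty finite set of vertices. -/
def IsHypergraph {V : Type*} [LinearOrder V] (H : Set (Finset V)) : Prop :=
  ∀ e ∈ H, e.Nonempty

/-- The associated simplicial complex `ΔH`: all nonempty subsets of hyperedges of `H`. -/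
def assocSC {V : Type*} [LinearOrder V] (H : Set (Finset V)) : Set (Finset V) :=
  {τ | τ.Nonempty ∧ ∃ σ ∈ H, τ ⊆ σ}

/-- The lower-associated simplicial complex `δH`. -/
def lowerSC {V : Type*} [LinearOrder V] (H : Set (Finset V)) : Set (Finset V) :=
  {σ | σ ∈ H ∧ ∀ τ : Finset V, τ.Nonempty → τ ⊆ σ → τ ∈ H}

/-- The signed boundary of the basis chain corresponding to a finite set `σ` (with the usual
simplicial signs coming from the linear order on the vertices); vertices map to `0`. -/
noncomputable def bdc {V : Type*} [LinearOrder V] (R : Type*) [CommRing R] (σ : Finset V) :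
    Finset V →₀ R :=
  if σ.card ≤ 1 then 0
  else ∑ v ∈ σ, ((-1 : R) ^ ((σ.filter (fun x => x < v)).card)) •
    Finsupp.single (σ.erase v) (1 : R)

/-- The simplicial boundary operator on the free `R`-module with basis all finite subsets of
`V`. -/
noncomputable def bd {V : Type*} [LinearOrder V] (R : Type*) [CommRing R] :
    (Finset V →₀ R) →ₗ[R] (Finset V →₀ R) :=
  Finsupp.lsum R fun σ => LinearMap.toSpanSingleton R (Finset V →₀ R) (bdc R σ)

/-- `R(H)_n`: the free `R`-module on the `n`-dimensional hyperedges of `H`, as a submodule of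
the chains. -/
noncomputable def RHmod {V : Type*} [LinearOrder V] (R : Type*) [CommRing R] (H : Set (Finset V)) (n : ℕ) :
    Submodule R (Finset V →₀ R) :=
  Submodule.span R {x | ∃ σ ∈ H, σ.card = n + 1 ∧ x = Finsupp.single σ (1 : R)}

/-- The infimum chain complex `Inf_n(R(H)_*) = R(H)_n ⊓ ∂⁻¹(R(H)_{n-1})`. -/
noncomputable def infC {V : Type*} [LinearOrder V] (R : Type*) [CommRing R]
    (H : Set (Finset V)) (n : ℕ) : Submodule R (Finset V →₀ R) :=
  RHmod R H n ⊓ Submodule.comap (bd R) (RHmod R H (n - 1))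

/-- The supremum chain complex `Sup_n(R(H)_*) = R(H)_n + ∂(R(H)_{n+1})`. -/
noncomputable def supC {V : Type*} [LinearOrder V] (R : Type*) [CommRing R]
    (H : Set (Finset V)) (n : ℕ) : Submodule R (Finset V →₀ R) :=
  RHmod R H n ⊔ Submodule.map (bd R) (RHmod R H (n + 1))

/-- The `n`-cycles of the infimum chain complex. -/
noncomputable def cycC {V : Type*} [LinearOrder V] (R : Type*) [CommRing R]
    (H : Set (Finset V)) (n : ℕ) : Submodule R (Finset V →₀ R) :=
  infC R H n ⊓ LinearMap.ker (bd R)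

/-- The `n`-th embedded homology of the hypergraph `H` with coefficients in `R`: the homology
of the infimum chain complex, realized as the image of the `n`-cycles in the quotient of the
chains by the boundaries `∂(Inf_{n+1})`. -/
@[reducible] noncomputable def emH {V : Type*} [LinearOrder V] (R : Type*) [CommRing R]
    (H : Set (Finset V)) (n : ℕ) :=
  ↥(Submodule.map (Submodule.mkQ (Submodule.map (bd R) (infC R H (n + 1)))) (cycC R H n))

/-- A single elementary collapse of `H` onto `H'` removing the free pair `σ < τ`:
`dim τ = dim σ + 1`, `σ` is not a proper subset of any hyperedge of `H` other than `τ`,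
every nonempty proper subset of `τ` is a hyperedge of `H`, and `H' = H \\ {σ, τ}`. -/
def IsElemCollapse {V : Type*} [LinearOrder V] (H H' : Set (Finset V))
    (s t : Finset V) : Prop :=
  s ∈ H ∧ t ∈ H ∧ s ⊂ t ∧ t.card = s.card + 1 ∧
  (∀ ρ ∈ H, s ⊂ ρ → ρ = t) ∧
  (∀ η : Finset V, η.Nonempty → η ⊂ t → η ∈ H) ∧
  H' = H \ {s, t}

/-- `CollapseSeq H H' L`: `H` is transformed into `H'` by the sequence `L` of single
elementary collapses (each list entry records the removed pair). -/
def CollapseSeq {V : Type*} [LinearOrder V] :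
    Set (Finset V) → Set (Finset V) → List (Finset V × Finset V) → Prop
  | H, H', [] => H' = H
  | H, H', p :: L => ∃ K : Set (Finset V), IsElemCollapse H K p.1 p.2 ∧ CollapseSeq K H' L

/-- `H` collapses onto `H'`: a finite sequence of single elementary collapses transforms
`H` into `H'`. -/
def Collapses {V : Type*} [LinearOrder V] (H H' : Set (Finset V)) : Prop :=
  Relation.ReflTransGen (fun A B => ∃ s t : Finset V, IsElemCollapse A B s t) H H'

/-- The graded module generated by `σ` in degree `dim σ` and `τ` in degree `dim τ`. -/
noncomputable def pairMod {V : Type*} [LinearOrder V] (R : Type*) [CommRing R] (s t : Finset V) (i : ℕ) :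
    Submodule R (Finset V →₀ R) :=
  Submodule.span R {x | (s.card = i + 1 ∧ x = Finsupp.single s (1 : R)) ∨
    (t.card = i + 1 ∧ x = Finsupp.single t (1 : R))}

section

variable {V : Type*} [LinearOrder V] (R : Type*) [CommRing R]

lemma RHmod_union (A B : Set (Finset V)) (n : ℕ) :
    RHmod R (A ∪ B) n = RHmod R A n ⊔ RHmod R B n := by
  simp only [RHmod, ← Submodule.span_union]
  congr 1
  ext x
  simp only [Set.mem_union, Set.mem_ofPred_eq, or_and_right, exists_or]

lemma RHmod_pair (s t : Finset V) (n : ℕ) : RHmod R {s, t} n = pairMod R s t n := by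
  simp only [RHmod, pairMod]
  congr 1
  ext x
  simp only [Set.mem_insert_iff, Set.mem_singleton_iff, Set.mem_ofPred_eq, exists_eq_or_imp,
    exists_eq_left]

lemma supC_union_pair (H : Set (Finset V)) (s t : Finset V) (n : ℕ) :
    supC R (H ∪ {s, t}) n =
      supC R H n ⊔ pairMod R s t n ⊔ Submodule.map (bd R) (pairMod R s t (n + 1)) := by
  simp only [supC, RHmod_union, RHmod_pair, Submodule.map_sup]
  rw [sup_sup_sup_comm, ← sup_assoc]

end

theorem supC_of_elemCollapse_general {V : Type*} [LinearOrder V] (R : Type*) [CommRing R]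
    (H H' : Set (Finset V)) (s t : Finset V)
    (hcol : IsElemCollapse H H' s t) :
    ∀ i : ℕ, supC R H i =
      supC R H' i ⊔ pairMod R s t i ⊔ Submodule.map (bd R) (pairMod R s t (i + 1)) := by
  obtain ⟨hs, ht, -, -, -, -, rfl⟩ := hcol
  have hH : H = (H \ {s, t}) ∪ {s, t} :=
    (Set.sdiff_union_of_subset (Set.insert_subset hs (Set.singleton_subset_iff.mpr ht))).symm
  intro i
  conv_lhs => rw [hH]
  exact supC_union_pair R (H \ {s, t}) s t i

/-- If `H` collapses onto `H'` by a single elementary collapse removing `σ < τ`, then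
`Sup_i(R(H)_*) = Sup_i(R(H')_*) + R⟨σ,τ⟩_i + ∂(R⟨σ,τ⟩_{i+1})` for every `i`. -/
theorem supC_of_elemCollapse {V : Type*} [LinearOrder V] (R : Type*) [CommRing R]
    (H H' : Set (Finset V)) (hH : IsHypergraph H) (s t : Finset V)
    (hcol : IsElemCollapse H H' s t) :
    ∀ i : ℕ, supC R H i =
      supC R H' i ⊔ pairMod R s t i ⊔ Submodule.map (bd R) (pairMod R s t (i + 1)) :=
  supC_of_elemCollapse_general R H H' s t hcol
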